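/- arXiv:1306.0821 — 2 statements merged into one kernel-verified Lean document; each statement's English description precedes it below -/
import Mathlib

section
/- Let F be an area-preserving random twist admitting a generalized generating function ℒ of complexity N, and set ℐ(q,ξ;ω) := ℒ(τ_q ω, 0, ξ₁−q, …, ξ_N−q). If (q̄, ξ̄) is a critical point of ℐ(·,·;ω), then the point (q̄, −𝒢_q(q̄, q̄; ξ̄, ω)) is a fixed point of F(·,·;ω), where 𝒢(q,Q;ξ,ω) := ℒ(τ_q ω, Q−q, ξ₁−q, …, ξ_N−q). -/
/-!
Since `ℐ(q, ξ) = 𝒢(q, q; ξ)`, the chain rule turns a critical point `(q̄, ξ̄)` of `ℐ` into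
`𝒢_ξ = 0` and `𝒢_q + 𝒢_Q = 0` at `(q̄, q̄; ξ̄)`. The generating property at `Q = q̄` (admissible
because `Q̄(·, -1) < 0 < Q̄(·, 1)`) then gives `F(q̄, -𝒢_q) = (q̄, 𝒢_Q) = (q̄, -𝒢_q)`.
-/

open MeasureTheory Set Filter
open scoped ENNReal Topology

noncomputable section

/-- The strip `𝒮 = ℝ × [-1,1]`. -/
def Strip : Set (ℝ × ℝ) := Set.univ ×ˢ Set.Icc (-1 : ℝ) 1

/-- A probability space setup `(Ω, ℱ, ℙ, τ)`: a separable metric space `Ω` with its Borel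
σ-algebra, a continuous `ℝ`-action `τ`, and a `τ`-invariant ergodic probability measure
which is positive on nonempty open sets. -/
structure RandomSetup (Ω : Type) [MetricSpace Ω] [MeasurableSpace Ω] [BorelSpace Ω] where
  separable : TopologicalSpace.SeparableSpace Ω
  P : Measure Ω
  prob : IsProbabilityMeasure P
  τ : ℝ → Ω → Ω
  cont : Continuous fun z : ℝ × Ω => τ z.1 z.2
  map_zero : ∀ ω, τ 0 ω = ω
  map_add : ∀ a b ω, τ a (τ b ω) = τ (a + b) ω
  open_pos : ∀ U : Set Ω, IsOpen U → U.Nonempty → 0 < P U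
  invariant : ∀ a : ℝ, MeasurePreserving (τ a) P P
  ergodic : ∀ A : Set Ω, MeasurableSet A → (∀ a : ℝ, τ a ⁻¹' A = A) → P A = 0 ∨ P A = 1

variable {Ω : Type} [MetricSpace Ω] [MeasurableSpace Ω] [BorelSpace Ω]

/-- The stationary lift `F(q,p;ω) = (q + Q̄(τ_q ω, p), P̄(τ_q ω, p))`. -/
def liftF (S : RandomSetup Ω) (Qb Pb : Ω → ℝ → ℝ) (ω : Ω) (x : ℝ × ℝ) : ℝ × ℝ :=
  (x.1 + Qb (S.τ x.1 ω) x.2, Pb (S.τ x.1 ω) x.2)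

/-- The Jacobian matrix `DF(x)` of a map of the strip (derivative within the strip). -/
def DFmat (F : ℝ × ℝ → ℝ × ℝ) (x : ℝ × ℝ) : Matrix (Fin 2) (Fin 2) ℝ :=
  !![(fderivWithin ℝ F Strip x (1, 0)).1, (fderivWithin ℝ F Strip x (0, 1)).1;
     (fderivWithin ℝ F Strip x (1, 0)).2, (fderivWithin ℝ F Strip x (0, 1)).2]

/-- A real 2×2 matrix has both eigenvalues real and positive. -/
def HasPosEigen (M : Matrix (Fin 2) (Fin 2) ℝ) : Prop :=
  ∃ a b : ℝ, 0 < a ∧ 0 < b ∧ M.trace = a + b ∧ M.det = a * b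

/-- A real 2×2 matrix has both eigenvalues real and negative. -/
def HasNegEigen (M : Matrix (Fin 2) (Fin 2) ℝ) : Prop :=
  ∃ a b : ℝ, a < 0 ∧ b < 0 ∧ M.trace = a + b ∧ M.det = a * b

/-- `F` is a C¹ diffeomorphism of the strip. -/
structure IsDiffeoStrip (F : ℝ × ℝ → ℝ × ℝ) : Prop where
  smooth : ContDiffOn ℝ 1 F Strip
  bij : Set.BijOn F Strip Strip
  inv : ∃ G : ℝ × ℝ → ℝ × ℝ, Set.InvOn G F Strip Strip ∧ ContDiffOn ℝ 1 G Strip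

/-- `F` is an area-preserving C¹ diffeomorphism of the strip. -/
structure IsAPDiffeoStrip (F : ℝ × ℝ → ℝ × ℝ) extends IsDiffeoStrip F : Prop where
  area : ∀ A : Set (ℝ × ℝ), A ⊆ Strip → MeasurableSet A → volume (F '' A) = volume A

/-- Area-preserving random twist map: (1) a.s. an area-preserving diffeomorphism of the
strip, (2) boundary invariance, (3) boundary twisting, (4) finite second moments. -/
def IsAPRandomTwist (S : RandomSetup Ω) (Qb Pb : Ω → ℝ → ℝ) : Prop :=
  Measurable (fun z : Ω × ℝ => (Qb z.1 z.2, Pb z.1 z.2)) ∧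
  (∃ C : ℝ≥0∞, C ≠ ⊤ ∧ ∀ p ∈ Set.Icc (-1 : ℝ) 1,
      (∫⁻ ω, ENNReal.ofReal (Qb ω p ^ 2 + Pb ω p ^ 2) ∂S.P) ≤ C) ∧
  (∀ᵐ ω ∂S.P,
    IsAPDiffeoStrip (liftF S Qb Pb ω) ∧
    (∀ q : ℝ, Pb (S.τ q ω) 1 = 1 ∧ Pb (S.τ q ω) (-1) = -1) ∧
    StrictMono (fun q : ℝ => q + Qb (S.τ q ω) 1) ∧
    StrictMono (fun q : ℝ => q + Qb (S.τ q ω) (-1)) ∧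
    0 < Qb ω 1 ∧ Qb ω (-1) < 0)

/-- Regularity: the derivatives of `F(·,·;ω)` and of its inverse are uniformly bounded
by a constant independent of `ω`, with probability one. -/
def IsRegularTwist (S : RandomSetup Ω) (Qb Pb : Ω → ℝ → ℝ) : Prop :=
  ∃ C : ℝ, ∀ᵐ ω ∂S.P,
    (∀ x ∈ Strip, ‖fderivWithin ℝ (liftF S Qb Pb ω) Strip x‖ ≤ C) ∧
    (∀ G : ℝ × ℝ → ℝ × ℝ, Set.InvOn G (liftF S Qb Pb ω) Strip Strip →
      ∀ x ∈ Strip, ‖fderivWithin ℝ G Strip x‖ ≤ C)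

/-- Positive monotone area-preserving random twist: `p ↦ Q̄(ω,p)` is increasing a.s. -/
def IsPosMonotone (S : RandomSetup Ω) (Qb Pb : Ω → ℝ → ℝ) : Prop :=
  IsAPRandomTwist S Qb Pb ∧
  ∀ᵐ ω ∂S.P, StrictMonoOn (Qb ω) (Set.Icc (-1 : ℝ) 1)

/-- Negative monotone area-preserving random twist: the (stationary) inverse of a
positive monotone area-preserving random twist. -/
def IsNegMonotone (S : RandomSetup Ω) (Qb Pb : Ω → ℝ → ℝ) : Prop :=
  Measurable (fun z : Ω × ℝ => (Qb z.1 z.2, Pb z.1 z.2)) ∧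
  ∃ Qb' Pb' : Ω → ℝ → ℝ, IsPosMonotone S Qb' Pb' ∧
    ∀ᵐ ω ∂S.P, Set.InvOn (liftF S Qb Pb ω) (liftF S Qb' Pb' ω) Strip Strip

/-- Monotone area-preserving random twist: positive or negative monotone. -/
def IsMonotoneTwist (S : RandomSetup Ω) (Qb Pb : Ω → ℝ → ℝ) : Prop :=
  IsPosMonotone S Qb Pb ∨ IsNegMonotone S Qb Pb

/-- Isotopic to the identity through stationary lifts: (a) each `F^t` is a stationary
lift and a diffeomorphism of the strip, with `F^0 = id` and `F^1 = F`; (b) the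
normalization `(1/2)∫_{-1}^1 𝔼 det DF^t dp = 1`; (c) `dF^t/dt`, `F^t` and `(F^t)⁻¹`
are bounded, a.s., uniformly in `t`. -/
def IsotopicToId (S : RandomSetup Ω) (Qb Pb : Ω → ℝ → ℝ) : Prop :=
  ∃ Qt Pt : ℝ → Ω → ℝ → ℝ,
    (∀ ω p, Qt 0 ω p = 0 ∧ Pt 0 ω p = p) ∧
    (∀ ω p, Qt 1 ω p = Qb ω p ∧ Pt 1 ω p = Pb ω p) ∧
    (∀ t ∈ Set.Icc (0 : ℝ) 1, ∀ᵐ ω ∂S.P, IsDiffeoStrip (liftF S (Qt t) (Pt t) ω)) ∧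
    (∀ t ∈ Set.Icc (0 : ℝ) 1,
      (1 / 2 : ℝ) *
        ∫ p in (-1 : ℝ)..1, (∫ ω, (DFmat (liftF S (Qt t) (Pt t) ω) (0, p)).det ∂S.P) = 1) ∧
    (∃ C : ℝ, ∀ t ∈ Set.Icc (0 : ℝ) 1, ∀ᵐ ω ∂S.P,
      (∀ x ∈ Strip,
        ‖liftF S (Qt t) (Pt t) ω x - x‖ ≤ C ∧
        ‖fderivWithin ℝ (liftF S (Qt t) (Pt t) ω) Strip x‖ ≤ C ∧
        ‖derivWithin (fun s => liftF S (Qt s) (Pt s) ω x) (Set.Icc (0 : ℝ) 1) t‖ ≤ C) ∧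
      (∀ G : ℝ × ℝ → ℝ × ℝ, Set.InvOn G (liftF S (Qt t) (Pt t) ω) Strip Strip →
        ∀ x ∈ Strip, ‖fderivWithin ℝ G Strip x‖ ≤ C))

/-- The set of fixed points of a strip map. -/
def FixedPts (F : ℝ × ℝ → ℝ × ℝ) : Set (ℝ × ℝ) := {x | x ∈ Strip ∧ F x = x}

/-- `compSeq fs N = fs N ∘ ⋯ ∘ fs 1 ∘ fs 0`. -/
def compSeq (fs : ℕ → ℝ × ℝ → ℝ × ℝ) : ℕ → ℝ × ℝ → ℝ × ℝ
  | 0 => fs 0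
  | n + 1 => fs (n + 1) ∘ compSeq fs n

section DiagonalCriticalPoint

variable {E F : Type*} [NormedAddCommGroup E] [NormedSpace ℝ E]
  [NormedAddCommGroup F] [NormedSpace ℝ F] {f : ℝ × ℝ × E → F} {a : ℝ} {x : E}

theorem fderiv_eq_zero_of_hasFDerivAt_diag_zero
    (hcrit : HasFDerivAt (fun z : ℝ × E => f (z.1, z.1, z.2)) (0 : ℝ × E →L[ℝ] F) (a, x)) :
    fderiv ℝ (fun ξ => f (a, a, ξ)) x = 0 := by
  have h := hcrit.comp (f := fun ξ => (a, ξ)) x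
    ((hasFDerivAt_const a x).prodMk (hasFDerivAt_id x))
  rw [ContinuousLinearMap.zero_comp] at h
  exact h.fderiv

theorem deriv_add_deriv_eq_zero_of_hasFDerivAt_diag_zero
    (hf : DifferentiableAt ℝ f (a, a, x))
    (hcrit : HasFDerivAt (fun z : ℝ × E => f (z.1, z.1, z.2)) (0 : ℝ × E →L[ℝ] F) (a, x)) :
    deriv (fun q => f (q, a, x)) a + deriv (fun Q => f (a, Q, x)) a = 0 := by
  set D := fderiv ℝ f (a, a, x)
  have hD : HasFDerivAt f D (a, a, x) := hf.hasFDerivAt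
  have hq : HasDerivAt (fun q => f (q, a, x)) (D (1, 0, 0)) a :=
    hD.comp_hasDerivAt a ((hasDerivAt_id a).prodMk (hasDerivAt_const a (a, x)))
  have hQ : HasDerivAt (fun Q => f (a, Q, x)) (D (0, 1, 0)) a :=
    hD.comp_hasDerivAt a
      ((hasDerivAt_const a a).prodMk ((hasDerivAt_id a).prodMk (hasDerivAt_const a x)))
  have hdiag : HasDerivAt (fun q => f (q, q, x)) (D (1, 1, 0)) a :=
    hD.comp_hasDerivAt a
      ((hasDerivAt_id a).prodMk ((hasDerivAt_id a).prodMk (hasDerivAt_const a x)))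
  have hdiag0 : HasDerivAt (fun q => f (q, q, x)) 0 a :=
    hcrit.comp_hasDerivAt (f := fun q => (q, x)) a
      ((hasDerivAt_id a).prodMk (hasDerivAt_const a x))
  rw [hq.deriv, hQ.deriv, ← map_add, ← hdiag.unique hdiag0]
  simp

end DiagonalCriticalPoint

theorem statement6_general {Ω : Type} [MetricSpace Ω] [MeasurableSpace Ω] [BorelSpace Ω]
    (S : RandomSetup Ω) (Qb Pb : Ω → ℝ → ℝ) (N : ℕ)
    (L : Ω → ℝ → (Fin N → ℝ) → ℝ)
    (ω : Ω)
    -- boundary twisting along the orbit of `ω` (so that `0 ∈ [Q̄(ω,-1), Q̄(ω,1)]`)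
    (hQneg : ∀ q : ℝ, Qb (S.τ q ω) (-1) < 0)
    (hQpos : ∀ q : ℝ, 0 < Qb (S.τ q ω) 1)
    -- `ℒ` is C¹ (through the flow)
    (hC1 : ContDiff ℝ 1 fun z : ℝ × ℝ × (Fin N → ℝ) => L (S.τ z.1 ω) z.2.1 z.2.2)
    -- `ℒ` is a generalized generating function of complexity `N` for `F`:
    (hGen : ∀ (q Q : ℝ) (ξ : Fin N → ℝ),
      Qb (S.τ q ω) (-1) ≤ Q - q → Q - q ≤ Qb (S.τ q ω) 1 →
      fderiv ℝ (fun ξ' : Fin N → ℝ => L (S.τ q ω) (Q - q) (fun i => ξ' i - q)) ξ = 0 →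
      liftF S Qb Pb ω
          (q, -deriv (fun q' => L (S.τ q' ω) (Q - q') (fun i => ξ i - q')) q) =
        (Q, deriv (fun Q' => L (S.τ q ω) (Q' - q) (fun i => ξ i - q)) Q))
    (qbar : ℝ) (ξbar : Fin N → ℝ)
    -- `(q̄, ξ̄)` is a critical point of `ℐ(q,ξ) = ℒ(τ_q ω, 0, ξ₁-q, …, ξ_N-q)`
    (hcrit : fderiv ℝ
      (fun z : ℝ × (Fin N → ℝ) => L (S.τ z.1 ω) 0 (fun i => z.2 i - z.1)) (qbar, ξbar) = 0) :
    liftF S Qb Pb ω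
        (qbar, -deriv (fun q' => L (S.τ q' ω) (qbar - q') (fun i => ξbar i - q')) qbar) =
      (qbar, -deriv (fun q' => L (S.τ q' ω) (qbar - q') (fun i => ξbar i - q')) qbar) := by
  let 𝒢 : ℝ × ℝ × (Fin N → ℝ) → ℝ :=
    fun z => L (S.τ z.1 ω) (z.2.1 - z.1) (fun i => z.2.2 i - z.1)
  have hL : Differentiable ℝ fun z : ℝ × ℝ × (Fin N → ℝ) => L (S.τ z.1 ω) z.2.1 z.2.2 :=
    hC1.differentiable one_ne_zero
  have h𝒢 : DifferentiableAt ℝ 𝒢 (qbar, qbar, ξbar) :=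
    (hL.comp (f := fun z : ℝ × ℝ × (Fin N → ℝ) => (z.1, z.2.1 - z.1, fun i => z.2.2 i - z.1))
      (by fun_prop)) _
  have hℐ : DifferentiableAt ℝ
      (fun z : ℝ × (Fin N → ℝ) => L (S.τ z.1 ω) 0 (fun i => z.2 i - z.1)) (qbar, ξbar) :=
    (hL.comp (f := fun z : ℝ × (Fin N → ℝ) => (z.1, (0 : ℝ), fun i => z.2 i - z.1))
      (by fun_prop)) _
  have hcrit𝒢 : HasFDerivAt (fun z : ℝ × (Fin N → ℝ) => 𝒢 (z.1, z.1, z.2))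
      (0 : ℝ × (Fin N → ℝ) →L[ℝ] ℝ) (qbar, ξbar) := by
    simpa only [𝒢, sub_self, hcrit] using hℐ.hasFDerivAt
  rw [hGen qbar qbar ξbar (by simpa using (hQneg qbar).le) (by simpa using (hQpos qbar).le)
    (fderiv_eq_zero_of_hasFDerivAt_diag_zero hcrit𝒢),
    eq_neg_of_add_eq_zero_right (deriv_add_deriv_eq_zero_of_hasFDerivAt_diag_zero h𝒢 hcrit𝒢)]

/-- **Proposition 2.3.** If `ℒ` is a generalized generating function of complexity `N`
for an area-preserving random twist `F`, and `(q̄,ξ̄)` is a critical point of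
`ℐ(q,ξ) = ℒ(τ_q ω, 0, ξ₁ − q, …, ξ_N − q)`, then `(q̄, −𝒢_q(q̄,q̄;ξ̄))` is a fixed point
of `F(·,·;ω)`. -/
theorem statement6 {Ω : Type} [MetricSpace Ω] [MeasurableSpace Ω] [BorelSpace Ω]
    (S : RandomSetup Ω) (Qb Pb : Ω → ℝ → ℝ) (N : ℕ)
    (L : Ω → ℝ → (Fin N → ℝ) → ℝ)
    (htwist : IsAPRandomTwist S Qb Pb)
    (ω : Ω)
    -- boundary twisting along the orbit of `ω` (so that `0 ∈ [Q̄(ω,-1), Q̄(ω,1)]`)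
    (hQneg : ∀ q : ℝ, Qb (S.τ q ω) (-1) < 0)
    (hQpos : ∀ q : ℝ, 0 < Qb (S.τ q ω) 1)
    -- `ℒ` is C¹ (through the flow)
    (hC1 : ContDiff ℝ 1 fun z : ℝ × ℝ × (Fin N → ℝ) => L (S.τ z.1 ω) z.2.1 z.2.2)
    -- `ℒ` is a generalized generating function of complexity `N` for `F`:
    (hGen : ∀ (q Q : ℝ) (ξ : Fin N → ℝ),
      Qb (S.τ q ω) (-1) ≤ Q - q → Q - q ≤ Qb (S.τ q ω) 1 →
      fderiv ℝ (fun ξ' : Fin N → ℝ => L (S.τ q ω) (Q - q) (fun i => ξ' i - q)) ξ = 0 →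
      liftF S Qb Pb ω
          (q, -deriv (fun q' => L (S.τ q' ω) (Q - q') (fun i => ξ i - q')) q) =
        (Q, deriv (fun Q' => L (S.τ q ω) (Q' - q) (fun i => ξ i - q)) Q))
    (qbar : ℝ) (ξbar : Fin N → ℝ)
    -- `(q̄, ξ̄)` is a critical point of `ℐ(q,ξ) = ℒ(τ_q ω, 0, ξ₁-q, …, ξ_N-q)`
    (hcrit : fderiv ℝ
      (fun z : ℝ × (Fin N → ℝ) => L (S.τ z.1 ω) 0 (fun i => z.2 i - z.1)) (qbar, ξbar) = 0) :
    liftF S Qb Pb ω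
        (qbar, -deriv (fun q' => L (S.τ q' ω) (qbar - q') (fun i => ξbar i - q')) qbar) =
      (qbar, -deriv (fun q' => L (S.τ q' ω) (qbar - q') (fun i => ξbar i - q')) qbar) :=
  statement6_general S Qb Pb N L ω hQneg hQpos hC1 hGen qbar ξbar hcrit
end
end

section
/- Let (Ω,ℱ,P,τ) be a probability space setup and ψ̄ : Ω → ℝ a bounded measurable function such that a ↦ ψ(a,ω) := ψ̄(τ_a ω) is continuous for P-almost every ω. If, with positive probability, the function a ↦ ψ(a,ω) is monotone on some interval [a₀,∞), then ψ̄ is P-almost surely equal to a constant. Consequently, if ψ̄ is not P-almost surely constant, then for P-almost every ω the function a ↦ ψ(a,ω) oscillates infinitely often; in particular it has infinitely many local maxima and infinitely many local minima, and if it is moreover C¹ in a, it has infinitely many critical points. -/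
open MeasureTheory Set Filter
open scoped ENNReal Topology

noncomputable section

variable {Ω : Type} [MetricSpace Ω] [MeasurableSpace Ω] [BorelSpace Ω]

/-!
An eventually monotone bounded orbit `a ↦ ψ̄(τ_a ω)` converges, so for every lag `t` the
increments `g_t = |ψ̄ ∘ τ_t - ψ̄|` tend to `0` along it. The limsup of the Cesàro means
`n⁻¹ ∫₀ⁿ h(τ_s ω) ds` is a measurable and exactly `τ`-invariant function of `ω`, hence a.s.
constant by ergodicity. For `h = g_t` it vanishes on a set of positive probability, so the Cesàro
means of `g_t` tend to `0` a.s.; as each of them has expectation `𝔼 g_t` by stationarity,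
dominated convergence gives `g_t = 0` a.s. Taking rational `t` and using continuity, `ψ̄` is a.s.
constant along orbits, so it agrees a.s. with its Cesàro limsup, which is a.s. constant.

If `ψ̄` is not a.s. constant, almost every orbit is therefore neither eventually monotone nor
eventually antitone, and a continuous function with that property has a local maximum and a local
minimum beyond every point.
-/

-- `cesaroMean f 0 = 0` is a junk value; only the behaviour as `n → ∞` matters.
def cesaroMean (f : ℝ → ℝ) (n : ℕ) : ℝ := (n : ℝ)⁻¹ * ∫ s in (0 : ℝ)..n, f s

lemma limsup_add_eq_of_tendsto_zero {ι : Type*} {l : Filter ι} [l.NeBot] {u v : ι → ℝ}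
    (hu_le : IsBoundedUnder (· ≤ ·) l u) (hu_ge : IsBoundedUnder (· ≥ ·) l u)
    (hv : Tendsto v l (𝓝 0)) :
    limsup (u + v) l = limsup u l := by
  have hv_le := hv.isBoundedUnder_le
  have hv_ge := hv.isBoundedUnder_ge
  refine le_antisymm ?_ ?_
  · simpa [hv.limsup_eq] using limsup_add_le hu_ge hu_le hv_ge.isCoboundedUnder_le hv_le
  · simpa [hv.liminf_eq] using le_limsup_add hu_le hu_ge.isCoboundedUnder_le hv_le hv_ge

section CesaroMean

variable {f : ℝ → ℝ} {B : ℝ}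

lemma abs_cesaroMean_le (hf : ∀ s, |f s| ≤ B) (n : ℕ) : |cesaroMean f n| ≤ B := by
  have hI : |∫ s in (0 : ℝ)..n, f s| ≤ B * n := by
    simpa using intervalIntegral.norm_integral_le_of_norm_le_const (a := 0) (b := n)
      fun s _ => (Real.norm_eq_abs _).trans_le (hf s)
  rcases Nat.eq_zero_or_pos n with rfl | hn
  · simpa [cesaroMean] using (abs_nonneg _).trans (hf 0)
  rw [cesaroMean, abs_mul, abs_inv, Nat.abs_cast, inv_mul_le_iff₀ (by positivity)]
  linarith

lemma cesaroMean_nonneg (hf : ∀ s, 0 ≤ f s) (n : ℕ) : 0 ≤ cesaroMean f n :=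
  mul_nonneg (inv_nonneg.2 n.cast_nonneg)
    (intervalIntegral.integral_nonneg n.cast_nonneg fun s _ => hf s)

lemma tendsto_cesaroMean_comp_add_sub (hf : ∀ s, |f s| ≤ B)
    (hfi : ∀ a b, IntervalIntegrable f volume a b) (b : ℝ) :
    Tendsto (fun n => cesaroMean (fun s => f (s + b)) n - cesaroMean f n) atTop (𝓝 0) := by
  have hwindow : ∀ x : ℝ, |∫ s in x..x + b, f s| ≤ B * |b| := fun x => by
    simpa using intervalIntegral.norm_integral_le_of_norm_le_const (a := x) (b := x + b)
      fun s _ => (Real.norm_eq_abs _).trans_le (hf s)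
  have hbound (n : ℕ) :
      |cesaroMean (fun s => f (s + b)) n - cesaroMean f n| ≤ (n : ℝ)⁻¹ * (2 * B * |b|) := by
    -- shifting the window `[0, n]` by `b` only changes the two end pieces of length `|b|`
    have hdiff : cesaroMean (fun s => f (s + b)) n - cesaroMean f n =
        (n : ℝ)⁻¹ * ((∫ s in (n : ℝ)..n + b, f s) - ∫ s in (0 : ℝ)..0 + b, f s) := by
      rw [cesaroMean, cesaroMean, intervalIntegral.integral_comp_add_right, ← mul_sub,
        intervalIntegral.integral_interval_sub_interval_comm' (hfi _ _) (hfi _ _) (hfi _ _)]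
    rw [hdiff, abs_mul, abs_inv, Nat.abs_cast]
    gcongr
    linarith [abs_sub (∫ s in (n : ℝ)..n + b, f s) (∫ s in (0 : ℝ)..0 + b, f s),
      hwindow n, hwindow 0]
  refine squeeze_zero_norm hbound ?_
  simpa using (tendsto_inv_atTop_zero.comp tendsto_natCast_atTop_atTop).mul_const (2 * B * |b|)

lemma limsup_cesaroMean_comp_add (hf : ∀ s, |f s| ≤ B)
    (hfi : ∀ a b, IntervalIntegrable f volume a b) (b : ℝ) :
    limsup (cesaroMean fun s => f (s + b)) atTop = limsup (cesaroMean f) atTop := by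
  have hbdd := fun n => abs_le.1 (abs_cesaroMean_le hf n)
  have := limsup_add_eq_of_tendsto_zero (isBoundedUnder_of ⟨B, fun n => (hbdd n).2⟩)
    (isBoundedUnder_of ⟨-B, fun n => (hbdd n).1⟩) (tendsto_cesaroMean_comp_add_sub hf hfi b)
  rw [← this]
  congr 1
  ext n
  simp

lemma tendsto_integral_add_one (hfi : ∀ a b, IntervalIntegrable f volume a b) {L : ℝ}
    (h : Tendsto f atTop (𝓝 L)) :
    Tendsto (fun x : ℝ => ∫ s in x..x + 1, f s) atTop (𝓝 L) := by
  rw [Metric.tendsto_atTop] at h ⊢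
  intro ε hε
  obtain ⟨N, hN⟩ := h (ε / 2) (half_pos hε)
  refine ⟨N, fun x hx => ?_⟩
  have hsub : (∫ s in x..x + 1, f s) - L = ∫ s in x..x + 1, (f s - L) := by
    simp [intervalIntegral.integral_sub (hfi _ _) intervalIntegrable_const]
  have hle : ‖∫ s in x..x + 1, (f s - L)‖ ≤ ε / 2 * |x + 1 - x| :=
    intervalIntegral.norm_integral_le_of_norm_le_const fun s hs =>
      (hN s (hx.trans (by simp at hs; linarith [hs.1]))).le
  rw [Real.dist_eq, hsub]
  simp only [add_sub_cancel_left, abs_one, mul_one] at hle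
  linarith [Real.norm_eq_abs (∫ s in x..x + 1, (f s - L))]

lemma tendsto_cesaroMean_of_tendsto (hfi : ∀ a b, IntervalIntegrable f volume a b) {L : ℝ}
    (h : Tendsto f atTop (𝓝 L)) : Tendsto (cesaroMean f) atTop (𝓝 L) := by
  have hsum (n : ℕ) :
      cesaroMean f n = (n : ℝ)⁻¹ * ∑ k ∈ Finset.range n, ∫ s in (k : ℝ)..k + 1, f s := by
    have := intervalIntegral.sum_integral_adjacent_intervals (a := fun k : ℕ => (k : ℝ)) (n := n)
      (μ := volume) fun k _ => hfi _ _
    push_cast at this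
    rw [cesaroMean, this]
  rw [funext hsum]
  exact ((tendsto_integral_add_one hfi h).comp tendsto_natCast_atTop_atTop).cesaro

end CesaroMean

section EventualMonotonicity

variable {f : ℝ → ℝ} {C a₀ : ℝ}

lemma exists_tendsto_of_monotoneOn_Ici (hf : MonotoneOn f (Ici a₀)) (hC : ∀ a, f a ≤ C) :
    ∃ L, Tendsto f atTop (𝓝 L) := by
  have hmono : Monotone fun s => f (max s a₀) := fun x y hxy =>
    hf (le_max_right x a₀) (le_max_right y a₀) (max_le_max hxy le_rfl)
  refine ⟨_, (tendsto_atTop_ciSup hmono ⟨C, forall_mem_range.2 fun _ => hC _⟩).congr' ?_⟩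
  filter_upwards [eventually_ge_atTop a₀] with s hs
  rw [max_eq_left hs]

lemma exists_tendsto_of_eventually_monotone (hC : ∀ a, |f a| ≤ C)
    (hf : MonotoneOn f (Ici a₀) ∨ AntitoneOn f (Ici a₀)) : ∃ L, Tendsto f atTop (𝓝 L) := by
  rcases hf with hf | hf
  · exact exists_tendsto_of_monotoneOn_Ici hf fun a => (abs_le.1 (hC a)).2
  · obtain ⟨L, hL⟩ := exists_tendsto_of_monotoneOn_Ici (f := fun a => -f a)
      (fun x hx y hy hxy => neg_le_neg (hf hx hy hxy)) fun a => neg_le.1 (abs_le.1 (hC a)).1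
    exact ⟨-L, by simpa using hL.neg⟩

lemma exists_isLocalMax_ge (hf : Continuous f) (hup : ∀ a, ¬AntitoneOn f (Ici a))
    (hdown : ∀ a, ¬MonotoneOn f (Ici a)) (a₀ : ℝ) : ∃ m, a₀ ≤ m ∧ IsLocalMax f m := by
  obtain ⟨u, hu, v, -, huv, hfuv⟩ : ∃ u ∈ Ici a₀, ∃ v ∈ Ici a₀, u ≤ v ∧ f u < f v := by
    simpa [AntitoneOn] using hup a₀
  obtain ⟨x, hx, y, -, hxy, hfxy⟩ : ∃ x ∈ Ici v, ∃ y ∈ Ici v, x ≤ y ∧ f y < f x := by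
    simpa [MonotoneOn] using hdown v
  simp only [mem_Ici] at hu hx
  -- a maximiser of `f` on `[u, y]` lies strictly inside, since `f u < f v` and `f y < f x`
  obtain ⟨m, ⟨hum, hmy⟩, hmax⟩ := isCompact_Icc.exists_isMaxOn
    (nonempty_Icc.2 (huv.trans (hx.trans hxy))) hf.continuousOn
  have hfum : f u < f m := hfuv.trans_le (hmax ⟨huv, hx.trans hxy⟩)
  have hfym : f y < f m := hfxy.trans_le (hmax ⟨huv.trans hx, hxy⟩)
  have hum' : u < m := lt_of_le_of_ne hum (by rintro rfl; exact hfum.false)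
  have hmy' : m < y := lt_of_le_of_ne hmy (by rintro rfl; exact hfym.false)
  exact ⟨m, hu.trans hum, hmax.isLocalMax (Icc_mem_nhds hum' hmy')⟩

lemma infinite_setOf_isLocalMax (hf : Continuous f) (hup : ∀ a, ¬AntitoneOn f (Ici a))
    (hdown : ∀ a, ¬MonotoneOn f (Ici a)) : {a | IsLocalMax f a}.Infinite := by
  refine infinite_of_not_bddAbove fun ⟨M, hM⟩ => ?_
  obtain ⟨m, hm, hmax⟩ := exists_isLocalMax_ge hf hup hdown (M + 1)
  linarith [hM hmax]

lemma infinite_setOf_isLocalMin (hf : Continuous f) (hup : ∀ a, ¬AntitoneOn f (Ici a))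
    (hdown : ∀ a, ¬MonotoneOn f (Ici a)) : {a | IsLocalMin f a}.Infinite := by
  have hneg := infinite_setOf_isLocalMax hf.neg
    (fun a hanti => hdown a fun x hx y hy hxy => neg_le_neg_iff.1 (hanti hx hy hxy))
    (fun a hmono => hup a fun x hx y hy hxy => neg_le_neg_iff.1 (hmono hx hy hxy))
  exact hneg.mono fun a ha => by simpa using ha.neg

end EventualMonotonicity

section Flow

attribute [local instance] RandomSetup.prob

variable (S : RandomSetup Ω) {h : Ω → ℝ} {B : ℝ}

def upperTimeAverage (h : Ω → ℝ) (ω : Ω) : ℝ :=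
  limsup (cesaroMean fun s => h (S.τ s ω)) atTop

lemma intervalIntegrable_orbit (hh : Measurable h) (hb : ∀ ω, |h ω| ≤ B) (ω : Ω) (a b : ℝ) :
    IntervalIntegrable (fun s => h (S.τ s ω)) volume a b :=
  intervalIntegrable_const.mono_fun'
    (hh.comp (S.cont.comp (continuous_id.prodMk continuous_const)).measurable).aestronglyMeasurable
    (ae_of_all _ fun _ => (Real.norm_eq_abs _).trans_le (hb _))

lemma measurable_cesaroMean_orbit (hh : Measurable h) (n : ℕ) :
    Measurable fun ω => cesaroMean (fun s => h (S.τ s ω)) n := by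
  have hjoint : StronglyMeasurable (Function.uncurry fun ω s => h (S.τ s ω)) :=
    (hh.comp (S.cont.measurable.comp measurable_swap)).stronglyMeasurable
  simp only [cesaroMean, intervalIntegral.integral_of_le (Nat.cast_nonneg n)]
  exact hjoint.integral_prod_right.measurable.const_mul _

lemma measurable_upperTimeAverage (hh : Measurable h) : Measurable (upperTimeAverage S h) :=
  Measurable.limsup fun n => measurable_cesaroMean_orbit S hh n

lemma upperTimeAverage_τ (hh : Measurable h) (hb : ∀ ω, |h ω| ≤ B) (b : ℝ) (ω : Ω) :
    upperTimeAverage S h (S.τ b ω) = upperTimeAverage S h ω := by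
  simp only [upperTimeAverage, S.map_add]
  exact limsup_cesaroMean_comp_add (fun s => hb _) (intervalIntegrable_orbit S hh hb ω) b

lemma integral_cesaroMean_orbit (hh : Measurable h) (hb : ∀ ω, |h ω| ≤ B) {n : ℕ} (hn : n ≠ 0) :
    ∫ ω, cesaroMean (fun s => h (S.τ s ω)) n ∂S.P = ∫ ω, h ω ∂S.P := by
  have hstat (s : ℝ) : ∫ ω, h (S.τ s ω) ∂S.P = ∫ ω, h ω ∂S.P := by
    have := integral_map (S.invariant s).measurable.aemeasurable (f := h)
      (by rw [(S.invariant s).map_eq]; exact hh.aestronglyMeasurable)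
    rwa [(S.invariant s).map_eq, eq_comm] at this
  have hjoint : Integrable (Function.uncurry fun ω s => h (S.τ s ω))
      (S.P.prod (volume.restrict (Ioc (0 : ℝ) n))) :=
    Integrable.of_bound (hh.comp (S.cont.measurable.comp measurable_swap)).aestronglyMeasurable B
      (ae_of_all _ fun _ => (Real.norm_eq_abs _).trans_le (hb _))
  have hn' : (0 : ℝ) < n := by positivity
  simp only [cesaroMean, intervalIntegral.integral_of_le hn'.le]
  rw [integral_const_mul, integral_integral_swap hjoint]
  simp [hstat, hn'.ne']

lemma exists_ae_eq_const_of_forall_comp_τ_eq {f : Ω → ℝ} (hf : Measurable f)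
    (hinv : ∀ b ω, f (S.τ b ω) = f ω) : ∃ c, f =ᵐ[S.P] fun _ => c := by
  refine exists_eventuallyEq_const_of_forall_separating MeasurableSet fun U hU => ?_
  have hpre (b : ℝ) : S.τ b ⁻¹' (f ⁻¹' U) = f ⁻¹' U := by
    ext ω
    simp [hinv]
  rcases S.ergodic _ (hf hU) hpre with h0 | h1
  · exact Or.inr (measure_eq_zero_iff_ae_notMem.1 h0)
  · exact Or.inl ((ae_mem_iff_measure_eq (hf hU).nullMeasurableSet).2 (by simp [h1]))

lemma ae_eq_zero_of_tendsto_orbit (hh : Measurable h) (h0 : ∀ ω, 0 ≤ h ω)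
    (hb : ∀ ω, |h ω| ≤ B) (hpos : 0 < S.P {ω | Tendsto (fun s => h (S.τ s ω)) atTop (𝓝 0)}) :
    h =ᵐ[S.P] 0 := by
  obtain ⟨c, hc⟩ := exists_ae_eq_const_of_forall_comp_τ_eq S (measurable_upperTimeAverage S hh)
    (upperTimeAverage_τ S hh hb)
  have hc0 : c = 0 := by
    by_contra hne
    refine hpos.ne' (measure_mono_null (fun ω hω => ?_) (ae_iff.1 hc))
    have := (tendsto_cesaroMean_of_tendsto (intervalIntegrable_orbit S hh hb ω) hω).limsup_eq
    simp only [mem_ofPred_eq, upperTimeAverage, this]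
    exact Ne.symm hne
  have htend : ∀ᵐ ω ∂S.P, Tendsto (cesaroMean fun s => h (S.τ s ω)) atTop (𝓝 0) := by
    filter_upwards [hc] with ω hω
    have hnonneg := fun n => cesaroMean_nonneg (fun s => h0 (S.τ s ω)) n
    have hle : IsBoundedUnder (· ≤ ·) atTop (cesaroMean fun s => h (S.τ s ω)) :=
      isBoundedUnder_of ⟨B, fun n => (abs_le.1 (abs_cesaroMean_le (fun s => hb _) n)).2⟩
    exact tendsto_of_le_liminf_of_limsup_le
      (le_liminf_of_le hle.isCoboundedUnder_ge (Eventually.of_forall hnonneg))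
      (hω.trans hc0).le hle (isBoundedUnder_of ⟨0, hnonneg⟩)
  have hlim := tendsto_integral_of_dominated_convergence (fun _ => B)
    (fun n => (measurable_cesaroMean_orbit S hh n).aestronglyMeasurable) (integrable_const B)
    (fun n => ae_of_all _ fun ω => (Real.norm_eq_abs _).trans_le
      (abs_cesaroMean_le (fun s => hb (S.τ s ω)) n)) htend
  have hint : ∫ ω, h ω ∂S.P = 0 := by
    refine tendsto_nhds_unique (tendsto_const_nhds.congr' ?_) (by simpa using hlim)
    filter_upwards [eventually_ne_atTop 0] with n hn
    exact (integral_cesaroMean_orbit S hh hb hn).symm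
  exact (integral_eq_zero_iff_of_nonneg h0 (Integrable.of_bound hh.aestronglyMeasurable B
    (ae_of_all _ fun ω => (Real.norm_eq_abs _).trans_le (hb ω)))).1 hint


lemma ae_comp_τ_eq_of_eventually_monotone {ψ : Ω → ℝ} {C : ℝ} (hm : Measurable ψ)
    (hC : ∀ ω, |ψ ω| ≤ C)
    (hpos : 0 < S.P {ω | ∃ a₀ : ℝ,
      MonotoneOn (fun a => ψ (S.τ a ω)) (Ici a₀) ∨ AntitoneOn (fun a => ψ (S.τ a ω)) (Ici a₀)})
    (t : ℝ) : ∀ᵐ ω ∂S.P, ψ (S.τ t ω) = ψ ω := by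
  have hlag : (fun ω => |ψ (S.τ t ω) - ψ ω|) =ᵐ[S.P] 0 := by
    refine ae_eq_zero_of_tendsto_orbit S (B := 2 * C)
      ((hm.comp (S.invariant t).measurable).sub hm).abs (fun _ => abs_nonneg _)
      (fun ω => ?_) (hpos.trans_le (measure_mono ?_))
    · rw [abs_abs]
      linarith [abs_sub (ψ (S.τ t ω)) (ψ ω), hC (S.τ t ω), hC ω]
    · rintro ω ⟨a₀, hmono⟩
      obtain ⟨L, hL⟩ := exists_tendsto_of_eventually_monotone (fun a => hC (S.τ a ω)) hmono
      have := ((hL.comp (tendsto_atTop_add_const_left atTop t tendsto_id)).sub hL).abs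
      simpa [S.map_add] using this
  filter_upwards [hlag] with ω hω
  exact sub_eq_zero.1 (abs_eq_zero.1 hω)

theorem exists_ae_eq_const_of_eventually_monotone {ψ : Ω → ℝ} {C : ℝ} (hm : Measurable ψ)
    (hC : ∀ ω, |ψ ω| ≤ C) (hcont : ∀ᵐ ω ∂S.P, Continuous fun a : ℝ => ψ (S.τ a ω))
    (hpos : 0 < S.P {ω | ∃ a₀ : ℝ,
      MonotoneOn (fun a => ψ (S.τ a ω)) (Ici a₀) ∨ AntitoneOn (fun a => ψ (S.τ a ω)) (Ici a₀)}) :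
    ∃ c, ∀ᵐ ω ∂S.P, ψ ω = c := by
  have horbit : ∀ᵐ ω ∂S.P, ∀ a, ψ (S.τ a ω) = ψ ω := by
    filter_upwards [ae_all_iff.2 fun q : ℚ => ae_comp_τ_eq_of_eventually_monotone S hm hC hpos q,
      hcont] with ω hq hω a
    refine congrFun (hω.ext_on Rat.denseRange_cast continuous_const ?_) a
    rintro _ ⟨q, rfl⟩
    exact hq q
  obtain ⟨c, hc⟩ := exists_ae_eq_const_of_forall_comp_τ_eq S (measurable_upperTimeAverage S hm)
    (upperTimeAverage_τ S hm hC)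
  refine ⟨c, ?_⟩
  filter_upwards [horbit, hc] with ω hω hcω
  have hconst : Tendsto (fun s => ψ (S.τ s ω)) atTop (𝓝 (ψ ω)) :=
    tendsto_const_nhds.congr fun a => (hω a).symm
  rw [← hcω, upperTimeAverage,
    (tendsto_cesaroMean_of_tendsto (intervalIntegrable_orbit S hm hC ω) hconst).limsup_eq]

end Flow

/-- **Proposition 4.3.** If a bounded stationary process `ψ(a,ω) = ψ̄(τ_a ω)` is, with
positive probability, eventually monotone, then `ψ̄` is a.s. constant. Consequently, a
non-constant bounded stationary process oscillates infinitely often: it has infinitely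
many local maxima and minima and (if C¹) infinitely many critical points, a.s. -/
theorem statement9 {Ω : Type} [MetricSpace Ω] [MeasurableSpace Ω] [BorelSpace Ω]
    (S : RandomSetup Ω) (psib : Ω → ℝ)
    (hm : Measurable psib) (hbd : ∃ C : ℝ, ∀ ω, |psib ω| ≤ C)
    (hcont : ∀ᵐ ω ∂S.P, Continuous fun a : ℝ => psib (S.τ a ω)) :
    (0 < S.P {ω | ∃ a₀ : ℝ,
        MonotoneOn (fun a => psib (S.τ a ω)) (Set.Ici a₀) ∨
        AntitoneOn (fun a => psib (S.τ a ω)) (Set.Ici a₀)} →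
      ∃ c : ℝ, ∀ᵐ ω ∂S.P, psib ω = c) ∧
    ((¬ ∃ c : ℝ, ∀ᵐ ω ∂S.P, psib ω = c) →
      ∀ᵐ ω ∂S.P,
        {a : ℝ | IsLocalMax (fun a' => psib (S.τ a' ω)) a}.Infinite ∧
        {a : ℝ | IsLocalMin (fun a' => psib (S.τ a' ω)) a}.Infinite ∧
        (ContDiff ℝ 1 (fun a' : ℝ => psib (S.τ a' ω)) →
          {a : ℝ | deriv (fun a' => psib (S.τ a' ω)) a = 0}.Infinite)) := by
  obtain ⟨C, hC⟩ := hbd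
  have hconst := exists_ae_eq_const_of_eventually_monotone S hm hC hcont
  refine ⟨hconst, fun hnc => ?_⟩
  have hnot := measure_eq_zero_iff_ae_notMem.1 (nonpos_iff_eq_zero.1 (not_lt.1 (mt hconst hnc)))
  filter_upwards [hcont, hnot] with ω hω hmono
  simp only [not_exists, not_or] at hmono
  have hmax := infinite_setOf_isLocalMax hω (fun a => (hmono a).2) (fun a => (hmono a).1)
  exact ⟨hmax, infinite_setOf_isLocalMin hω (fun a => (hmono a).2) (fun a => (hmono a).1),
    fun _ => hmax.mono fun a ha => ha.deriv_eq_zero⟩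
end
end
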